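/- Let p be a prime and R = (ZMod p)^A. If f ∈ R[X] is a polynomial with all exponents at most p−1 and h = r·x^m is any monomial of f (with nonzero coefficient r ∈ R), then h belongs to the R-polynomial linearly closed clonoid generated by f. -/

import Mathlib

/-!
Substituting `c • xₗ` for `xₗ` is an operation of the clonoid, and it multiplies the coefficient
of `x^m` by `c ^ mₗ`. Since all exponents are below `p`, the power functions `c ↦ c ^ e`,
`e ≤ p - 1`, are linearly independent on `ZMod p`, so a suitable `ZMod p`-linear combination of
these substitutions keeps exactly the monomials of degree `mₗ` in `xₗ`. Doing this for every
variable of `f` isolates the monomial `x^m`.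
-/

/-- An `R`-polynomial linearly closed clonoid, for `R = (ZMod p)^A`: a nonempty set of
multivariate polynomials over `R` closed under `ZMod p`-linear combinations and under
substituting a `ZMod p`-linear combination of variables for a variable. -/
def IsRPolyLinClosedClonoid (p : ℕ) (A : Type*)
    (C : Set (MvPolynomial ℕ (A → ZMod p))) : Prop :=
  C.Nonempty ∧
  (∀ (a b : ZMod p) (f g : MvPolynomial ℕ (A → ZMod p)),
    f ∈ C → g ∈ C → a • f + b • g ∈ C) ∧
  (∀ (f : MvPolynomial ℕ (A → ZMod p)) (l s : ℕ) (a : Fin s → ZMod p), f ∈ C →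
    MvPolynomial.bind₁
      (fun j => if j = l then ∑ i : Fin s, a i • MvPolynomial.X (i : ℕ)
                else MvPolynomial.X j) f ∈ C)

namespace FiniteField

variable {K : Type*} [Field K] [Fintype K]

local notation "q" => Fintype.card K

theorem sum_pow_eq_sum_units_pow [DecidableEq K] {k : ℕ} (hk : k ≠ 0) :
    ∑ x : K, x ^ k = ∑ x : Kˣ, (x : K) ^ k := by
  rw [← Finset.sum_erase Finset.univ (zero_pow hk)]
  symm
  refine Finset.sum_bij (fun u _ => (u : K)) (by simp) (fun _ _ _ _ => Units.ext) ?_ (by simp)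
  intro x hx
  exact ⟨Units.mk0 x (Finset.ne_of_mem_erase hx), by simp⟩

theorem sum_pow_lt_two_mul_card_sub_one {k : ℕ} (hk : k < 2 * (q - 1)) :
    ∑ x : K, x ^ k = if k = q - 1 then -1 else 0 := by
  classical
  rcases Nat.eq_zero_or_pos k with rfl | hk0
  · rw [if_neg (by omega), sum_pow_lt_card_sub_one K 0 (by omega)]
  rw [sum_pow_eq_sum_units_pow hk0.ne', sum_pow_units]
  congr 1
  refine propext ⟨fun ⟨t, ht⟩ => ?_, fun h => h ▸ dvd_rfl⟩
  rcases t with _ | _ | t <;> [omega; omega; nlinarith]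

variable (K) in
def degreeWeight [DecidableEq K] (d : ℕ) (c : K) : K :=
  if d = 0 then (if c = 0 then 1 else 0) else -c ^ (q - 1 - d)

theorem sum_degreeWeight_mul_pow [DecidableEq K] {d e : ℕ} (hd : d ≤ q - 1) (he : e ≤ q - 1) :
    ∑ c : K, degreeWeight K d c * c ^ e = if e = d then 1 else 0 := by
  rcases Nat.eq_zero_or_pos d with rfl | hd0
  · simp [degreeWeight, zero_pow_eq]
  · have hk : q - 1 - d + e < 2 * (q - 1) := by omega
    simp only [degreeWeight, hd0.ne', if_false, neg_mul, ← pow_add, Finset.sum_neg_distrib,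
      sum_pow_lt_two_mul_card_sub_one hk]
    by_cases hed : e = d
    · simp [hed, show q - 1 - d + d = q - 1 by omega]
    · simp [hed, show q - 1 - d + e ≠ q - 1 by omega]

end FiniteField

namespace MvPolynomial

variable {σ K R : Type*} [DecidableEq σ] [CommSemiring R]

noncomputable def scaleVar [CommSemiring K] [Algebra K R] (l : σ) (c : K) :
    MvPolynomial σ R →ₐ[R] MvPolynomial σ R :=
  bind₁ (Function.update X l (c • X l))

section CommSemiring

variable [CommSemiring K] [Algebra K R]

theorem scaleVar_monomial (l : σ) (c : K) (m : σ →₀ ℕ) (r : R) :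
    scaleVar l c (monomial m r) = monomial m (c ^ m l • r) := by
  have hX : Function.update X l (c • X l) =
      fun i => (Pi.mulSingle l c : σ → K) i • (X i : MvPolynomial σ R) := by
    funext i
    rcases eq_or_ne i l with rfl | h <;> simp [*]
  rw [scaleVar, hX, bind₁_monomial]
  simp only [smul_pow, Finset.prod_smul]
  rw [Finset.prod_eq_single l (fun i _ hi => by simp [hi]) (fun hl => by simp_all),
    Pi.mulSingle_eq_same, mul_smul_comm, ← smul_monomial, monomial_eq, Finsupp.prod]

theorem coeff_scaleVar (l : σ) (c : K) (f : MvPolynomial σ R) (m : σ →₀ ℕ) :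
    coeff m (scaleVar l c f) = c ^ m l • coeff m f := by
  induction f using MvPolynomial.induction_on' with
  | monomial m' r =>
    rw [scaleVar_monomial, coeff_monomial, coeff_monomial]
    split_ifs with h <;> simp [h]
  | add f g hf hg => simp [hf, hg, smul_add]

end CommSemiring

open FiniteField in
theorem weightedHomogeneousComponent_single_eq_sum_scaleVar [Field K] [Fintype K]
    [DecidableEq K] [Algebra K R] {l : σ} {d : ℕ} {f : MvPolynomial σ R}
    (hd : d ≤ Fintype.card K - 1) (hf : ∀ m ∈ f.support, m l ≤ Fintype.card K - 1) :
    weightedHomogeneousComponent (Pi.single l 1) d f =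
      ∑ c : K, degreeWeight K d c • scaleVar l c f := by
  ext m
  simp only [coeff_sum, coeff_smul, coeff_scaleVar, smul_smul, ← Finset.sum_smul,
    coeff_weightedHomogeneousComponent, Finsupp.weight_single_one_apply]
  by_cases hm : m ∈ f.support
  · rw [sum_degreeWeight_mul_pow hd (hf m hm)]
    split_ifs <;> simp
  · simp [notMem_support_iff.mp hm]

end MvPolynomial

namespace IsRPolyLinClosedClonoid

open MvPolynomial

variable {p : ℕ} {A : Type*} {C : Set (MvPolynomial ℕ (A → ZMod p))}

def toSubmodule (hC : IsRPolyLinClosedClonoid p A C) :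
    Submodule (ZMod p) (MvPolynomial ℕ (A → ZMod p)) where
  carrier := C
  add_mem' {f g} hf hg := by simpa using hC.2.1 1 1 f g hf hg
  zero_mem' := by
    obtain ⟨g, hg⟩ := hC.1
    simpa using hC.2.1 0 0 g g hg hg
  smul_mem' a f hf := by simpa using hC.2.1 a 0 f f hf hf

theorem scaleVar_mem (hC : IsRPolyLinClosedClonoid p A C) (l : ℕ) (c : ZMod p)
    {f : MvPolynomial ℕ (A → ZMod p)} (hf : f ∈ C) : scaleVar l c f ∈ C := by
  convert hC.2.2 f l (l + 1) (Pi.single (Fin.last l) c) hf using 1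
  rw [scaleVar]
  congr 2
  funext j
  simp [Function.update_apply]

theorem weightedHomogeneousComponent_single_mem [Fact p.Prime]
    (hC : IsRPolyLinClosedClonoid p A C) {l d : ℕ} (hd : d ≤ p - 1)
    {f : MvPolynomial ℕ (A → ZMod p)} (hf : f ∈ C) (hexp : ∀ m ∈ f.support, m l ≤ p - 1) :
    weightedHomogeneousComponent (Pi.single l 1) d f ∈ C := by
  rw [weightedHomogeneousComponent_single_eq_sum_scaleVar (K := ZMod p) (by rwa [ZMod.card])
    (by rwa [ZMod.card])]
  exact hC.toSubmodule.sum_mem fun c _ => hC.toSubmodule.smul_mem _ (hC.scaleVar_mem l c hf)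

theorem monomial_coeff_mem_of_eq_of_notMem [Fact p.Prime]
    (hC : IsRPolyLinClosedClonoid p A C) {m : ℕ →₀ ℕ} (V : Finset ℕ)
    {f : MvPolynomial ℕ (A → ZMod p)} (hf : f ∈ C)
    (hexp : ∀ m' ∈ f.support, ∀ i, m' i ≤ p - 1) (hm : m ∈ f.support)
    (hV : ∀ m' ∈ f.support, ∀ i ∉ V, m' i = m i) :
    monomial m (coeff m f) ∈ C := by
  induction V using Finset.induction_on generalizing f with
  | empty =>
    rwa [← eq_monomial_of_support_subset_singleton fun m' hm' =>
      Finsupp.ext fun i => hV m' hm' i (Finset.notMem_empty i)]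
  | insert l V _ ih =>
    set g := weightedHomogeneousComponent (Pi.single l 1) (m l) f
    have hcoeff (m' : ℕ →₀ ℕ) : coeff m' g = if m' l = m l then coeff m' f else 0 := by
      simp [g, coeff_weightedHomogeneousComponent, Finsupp.weight_single_one_apply]
    have hsupport {m'} (hm' : m' ∈ g.support) : m' ∈ f.support ∧ m' l = m l := by
      rw [mem_support_iff, hcoeff] at hm'
      split_ifs at hm' with h
      exacts [⟨mem_support_iff.mpr hm', h⟩, (hm' rfl).elim]
    have hgm : coeff m g = coeff m f := by rw [hcoeff, if_pos rfl]
    rw [← hgm]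
    refine ih (hC.weightedHomogeneousComponent_single_mem (hexp m hm l) hf fun m' h => hexp m' h l)
      (fun m' h => hexp m' (hsupport h).1) (by rwa [mem_support_iff, hgm, ← mem_support_iff])
      fun m' h i hi => ?_
    rcases eq_or_ne i l with rfl | hil
    · exact (hsupport h).2
    · exact hV m' (hsupport h).1 i (by simp [hil, hi])

end IsRPolyLinClosedClonoid

theorem monomial_in_clonoid_generated_by_general (p : ℕ) (hp : p.Prime) (A : Type*)
    (f : MvPolynomial ℕ (A → ZMod p))
    (hexp : ∀ m ∈ f.support, ∀ i, m i ≤ p - 1)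
    (m : ℕ →₀ ℕ) (hm : m ∈ f.support) :
    ∀ C, IsRPolyLinClosedClonoid p A C → f ∈ C →
      MvPolynomial.monomial m (f.coeff m) ∈ C := by
  have := Fact.mk hp
  intro C hC hfC
  refine hC.monomial_coeff_mem_of_eq_of_notMem f.vars hfC hexp hm fun m' hm' i hi => ?_
  rw [MvPolynomial.mem_support_notMem_vars_zero hm' hi,
    MvPolynomial.mem_support_notMem_vars_zero hm hi]

theorem monomial_in_clonoid_generated_by (p : ℕ) (hp : p.Prime) (A : Type*) [Fintype A]
    (f : MvPolynomial ℕ (A → ZMod p))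
    (hexp : ∀ m ∈ f.support, ∀ i, m i ≤ p - 1)
    (m : ℕ →₀ ℕ) (hm : m ∈ f.support) :
    ∀ C, IsRPolyLinClosedClonoid p A C → f ∈ C →
      MvPolynomial.monomial m (f.coeff m) ∈ C :=
  monomial_in_clonoid_generated_by_general p hp A f hexp m hm
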